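/- arXiv:2201.00850 — 3 statements merged into one kernel-verified Lean document; each statement's English description precedes it below -/
import Mathlib

section
/- Let h_i : ℝ^n → ℝ^n, i = 1,…,K, be piecewise-affine functions with pieces h_i(c) = F^i_{λ_i} c + f^i_{λ_i} on polyhedra Ψ_{λ_i} covering ℝ^n (Λ_i finite), and define F̄_i as the entrywise maximum of the matrices {|F^i_{λ_i}|}_{λ_i ∈ Λ_i}. Let W ∈ ℝ^{n'×n'}, W_1^i ∈ ℝ^{n'×n}, W_2^i ∈ ℝ^{n×n'} be arbitrary matrices, m ∈ ℝ^{n'} with m > 0, and τ > 0. If the spectral radius satisfies ρ(|W| + Σ_{i=1}^K |W_1^i| F̄_i |W_2^i|) < 1, then for all constant vectors c̄_1,…,c̄_K and c, the dynamics τ ẋ = −x + [W x + Σ_{i=1}^K W_1^i h_i(W_2^i x + c̄_i) + c]_0^m has a unique equilibrium and is globally exponentially stable to it. -/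
open Matrix

noncomputable section

/-- componentwise clamping of `x` to the box `[0, m]` -/
def clamp {ι : Type*} (m x : ι → ℝ) : ι → ℝ := fun k => min (max (x k) 0) (m k)

/-- entrywise absolute value of a matrix -/
def eAbs {α β : Type*} (A : Matrix α β ℝ) : Matrix α β ℝ := Matrix.of fun k l => |A k l|

/-- spectral radius of a real matrix: the largest modulus of its (complex) spectrum -/
def specRad {ι : Type*} [Fintype ι] [DecidableEq ι] (A : Matrix ι ι ℝ) : ℝ :=
  sSup ((fun z : ℂ => ‖z‖) '' spectrum ℂ (A.map (fun a : ℝ => (a : ℂ))))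

/-!
The map `T x = [W x + Σᵢ W₁ⁱ hᵢ(W₂ⁱ x + c̄ᵢ) + c]₀ᵐ` satisfies the entrywise bound
`|T x - T y| ≤ A |x - y|` with `A = |W| + Σᵢ |W₁ⁱ| F̄ᵢ |W₂ⁱ|`: clamping is 1-Lipschitz in every
coordinate, and along a segment a piecewise-affine `hᵢ` is affine on finitely many closed
intervals, with slopes bounded by `F̄ᵢ`.

By Gelfand's formula `ρ(A) < 1` gives `‖Aᴺ‖∞ < sᴺ` for some `s < 1`, and then
`v = Σ_{p<N} s⁻ᵖ Aᵖ 𝟙 ≥ 𝟙` satisfies `A v ≤ s v`. In the weighted norm `‖z / v‖∞` the map `T` is an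
`s`-contraction, whence the unique equilibrium `x*`. Along a trajectory, `e^{t/τ} (x(t) - x*) / v`
grows at rate at most `s/τ` by Grönwall, so `x(t) → x*` at rate `(1 - s)/τ`.
-/

open Filter Topology Set

def EntrywiseLipschitzWith {ι κ : Type*} [Fintype κ] (A : Matrix ι κ ℝ)
    (T : (κ → ℝ) → ι → ℝ) : Prop :=
  ∀ x y, |T x - T y| ≤ A *ᵥ |x - y|

section EntrywiseLipschitz

variable {ι κ μ : Type*}

theorem Matrix.mul_apply_nonneg [Fintype μ] {A : Matrix ι μ ℝ} {B : Matrix μ κ ℝ}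
    (hA : ∀ i j, 0 ≤ A i j) (hB : ∀ i j, 0 ≤ B i j) (i : ι) (j : κ) : 0 ≤ (A * B) i j :=
  Finset.sum_nonneg fun l _ => mul_nonneg (hA i l) (hB l j)

theorem abs_clamp_sub_clamp_le (m x y : ι → ℝ) : |clamp m x - clamp m y| ≤ |x - y| := fun k =>
  (abs_min_sub_min_le_max _ _ _ _).trans <| by
    simpa using abs_max_sub_max_le_abs (x k) (y k) 0

variable [Fintype κ]

theorem Matrix.mulVec_mono_of_nonneg {A : Matrix ι κ ℝ} (hA : ∀ i j, 0 ≤ A i j) {x y : κ → ℝ}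
    (hxy : x ≤ y) : A *ᵥ x ≤ A *ᵥ y :=
  fun i => Finset.sum_le_sum fun j _ => mul_le_mul_of_nonneg_left (hxy j) (hA i j)

theorem Matrix.abs_mulVec_le (A : Matrix ι κ ℝ) (x : κ → ℝ) : |A *ᵥ x| ≤ eAbs A *ᵥ |x| := fun i =>
  (Finset.abs_sum_le_sum_abs _ _).trans_eq (by simp [eAbs, mulVec, dotProduct, abs_mul])

namespace EntrywiseLipschitzWith

variable {A B : Matrix ι κ ℝ} {T S : (κ → ℝ) → ι → ℝ}

theorem mulVec (A : Matrix ι κ ℝ) : EntrywiseLipschitzWith (eAbs A) (A *ᵥ ·) := fun x y => by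
  simpa [Matrix.mulVec_sub] using abs_mulVec_le A (x - y)

theorem add_const (hT : EntrywiseLipschitzWith A T) (c : ι → ℝ) :
    EntrywiseLipschitzWith A (fun x => T x + c) := fun x y => by
  simpa using hT x y

theorem add (hT : EntrywiseLipschitzWith A T) (hS : EntrywiseLipschitzWith B S) :
    EntrywiseLipschitzWith (A + B) (fun x => T x + S x) := fun x y =>
  calc |T x + S x - (T y + S y)| = |(T x - T y) + (S x - S y)| := by rw [add_sub_add_comm]
    _ ≤ |T x - T y| + |S x - S y| := abs_add_le _ _
    _ ≤ (A + B) *ᵥ |x - y| := by rw [add_mulVec]; exact add_le_add (hT x y) (hS x y)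

theorem sum {α : Type*} (s : Finset α) {A : α → Matrix ι κ ℝ} {T : α → (κ → ℝ) → ι → ℝ}
    (hT : ∀ a ∈ s, EntrywiseLipschitzWith (A a) (T a)) :
    EntrywiseLipschitzWith (∑ a ∈ s, A a) (fun x => ∑ a ∈ s, T a x) := by
  classical
  induction s using Finset.induction_on with
  | empty => intro x y; simp
  | insert a s ha ih =>
    simp only [Finset.sum_insert ha]
    exact (hT a (Finset.mem_insert_self a s)).add
      (ih fun b hb => hT b (Finset.mem_insert_of_mem hb))

theorem comp [Fintype μ] {B : Matrix ι μ ℝ} {T : (μ → ℝ) → ι → ℝ} {A : Matrix μ κ ℝ}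
    {S : (κ → ℝ) → μ → ℝ} (hT : EntrywiseLipschitzWith B T) (hB : ∀ i j, 0 ≤ B i j)
    (hS : EntrywiseLipschitzWith A S) : EntrywiseLipschitzWith (B * A) (fun x => T (S x)) :=
  fun x y =>
  calc |T (S x) - T (S y)| ≤ B *ᵥ |S x - S y| := hT _ _
    _ ≤ B *ᵥ (A *ᵥ |x - y|) := mulVec_mono_of_nonneg hB (hS x y)
    _ = (B * A) *ᵥ |x - y| := mulVec_mulVec _ _ _

theorem clamp_comp (hT : EntrywiseLipschitzWith A T) (m : ι → ℝ) :
    EntrywiseLipschitzWith A (fun x => clamp m (T x)) := fun x y =>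
  (abs_clamp_sub_clamp_le m _ _).trans (hT x y)

end EntrywiseLipschitzWith

end EntrywiseLipschitz

section PiecewiseAffine

variable {L : Type*} [Finite L] {J : L → Set ℝ} {φ : ℝ → ℝ} {slope : L → ℝ}

theorem continuous_of_affineOn_closed_cover (hclosed : ∀ l, IsClosed (J l))
    (hcov : ∀ t, ∃ l, t ∈ J l)
    (haff : ∀ l, ∀ s ∈ J l, ∀ t ∈ J l, φ t - φ s = slope l * (t - s)) : Continuous φ := by
  refine (locallyFinite_of_finite J).continuous (iUnion_eq_univ_iff.2 hcov) hclosed fun l => ?_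
  rcases (J l).eq_empty_or_nonempty with hl | ⟨s, hs⟩
  · simp [hl]
  · exact (by fun_prop : Continuous fun t => φ s + slope l * (t - s)).continuousOn.congr
      fun t ht => by linarith [haff l s hs t ht]

theorem exists_mem_nhdsGT_of_closed_convex_cover (hclosed : ∀ l, IsClosed (J l))
    (hconv : ∀ l, Convex ℝ (J l)) (hcov : ∀ t, ∃ l, t ∈ J l) (x : ℝ) :
    ∃ l, x ∈ J l ∧ J l ∈ 𝓝[>] x := by
  by_contra! hnone
  have hcompl : ∀ l, (J l)ᶜ ∈ 𝓝[>] x := by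
    intro l
    by_cases hx : x ∈ J l
    · refine mem_of_superset self_mem_nhdsWithin fun y (hxy : x < y) hy => hnone l hx ?_
      exact mem_of_superset (Ioo_mem_nhdsGT hxy)
        (Ioo_subset_Icc_self.trans ((hconv l).ordConnected.out hx hy))
    · exact mem_nhdsWithin_of_mem_nhds ((hclosed l).isOpen_compl.mem_nhds hx)
  obtain ⟨t, ht⟩ := Filter.nonempty_of_mem (iInter_mem.2 hcompl)
  obtain ⟨l, hl⟩ := hcov t
  exact mem_iInter.1 ht l hl

theorem abs_sub_le_of_affineOn_closed_convex_cover (hclosed : ∀ l, IsClosed (J l))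
    (hconv : ∀ l, Convex ℝ (J l)) (hcov : ∀ t, ∃ l, t ∈ J l)
    (haff : ∀ l, ∀ s ∈ J l, ∀ t ∈ J l, φ t - φ s = slope l * (t - s))
    {S : ℝ} (hS : ∀ l, |slope l| ≤ S) {a b : ℝ} (hab : a ≤ b) :
    |φ b - φ a| ≤ S * (b - a) := by
  have hφ : Continuous φ := continuous_of_affineOn_closed_cover hclosed hcov haff
  suffices Icc a b ⊆ {t | |φ t - φ a| ≤ S * (t - a)} from this ⟨hab, le_rfl⟩
  refine IsClosed.Icc_subset_of_forall_mem_nhdsWithin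
    ((isClosed_le (by fun_prop) (by fun_prop)).inter isClosed_Icc) (by simp) ?_
  rintro x ⟨hx, -⟩
  obtain ⟨l, hxl, hl⟩ := exists_mem_nhdsGT_of_closed_convex_cover hclosed hconv hcov x
  filter_upwards [hl, self_mem_nhdsWithin] with y hyl (hxy : x < y)
  calc |φ y - φ a| ≤ |φ y - φ x| + |φ x - φ a| := abs_sub_le _ _ _
    _ ≤ S * (y - x) + S * (x - a) := by
        rw [haff l x hxl y hyl, abs_mul, abs_of_pos (sub_pos.2 hxy)]
        exact add_le_add (mul_le_mul_of_nonneg_right (hS l) (sub_pos.2 hxy).le) hx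
    _ = S * (y - a) := by ring

end PiecewiseAffine

theorem convex_setOf_nonneg_mulVec_add {ρ κ : Type*} [Fintype κ] (G : Matrix ρ κ ℝ) (g : ρ → ℝ) :
    Convex ℝ {c | 0 ≤ G *ᵥ c + g} := by
  intro x hx y hy a b ha hb hab
  have hsplit : G *ᵥ (a • x + b • y) + g = a • (G *ᵥ x + g) + b • (G *ᵥ y + g) := by
    rw [mulVec_add, mulVec_smul, mulVec_smul, smul_add, smul_add, add_add_add_comm,
      ← add_smul, hab, one_smul]
  show 0 ≤ G *ᵥ (a • x + b • y) + g
  rw [hsplit]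
  exact add_nonneg (smul_nonneg ha hx) (smul_nonneg hb hy)

theorem EntrywiseLipschitzWith.of_piecewiseAffine {ι κ L : Type*} [Fintype κ] [Finite L]
    {R : L → Type*} {F : L → Matrix ι κ ℝ} {f : L → ι → ℝ} {G : (l : L) → Matrix (R l) κ ℝ}
    {g : (l : L) → R l → ℝ} {h : (κ → ℝ) → ι → ℝ}
    (hcover : ∀ c, ∃ l, 0 ≤ G l *ᵥ c + g l)
    (hpiece : ∀ l c, 0 ≤ G l *ᵥ c + g l → h c = F l *ᵥ c + f l)
    {Fbar : Matrix ι κ ℝ} (hFbar : ∀ l i j, |F l i j| ≤ Fbar i j) :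
    EntrywiseLipschitzWith Fbar h := by
  intro u u' i
  let J l := AffineMap.lineMap (k := ℝ) u u' ⁻¹' {c | 0 ≤ G l *ᵥ c + g l}
  have hclosed : ∀ l, IsClosed (J l) := fun l =>
    (isClosed_le continuous_const (by fun_prop)).preimage AffineMap.lineMap_continuous
  have hconv : ∀ l, Convex ℝ (J l) := fun l =>
    (convex_setOf_nonneg_mulVec_add (G l) (g l)).affine_preimage _
  have haff : ∀ l, ∀ s ∈ J l, ∀ t ∈ J l, h (AffineMap.lineMap u u' t) i
      - h (AffineMap.lineMap u u' s) i = (F l *ᵥ (u' - u)) i * (t - s) := by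
    intro l s hs t ht
    rw [hpiece l _ ht, hpiece l _ hs]
    simp only [AffineMap.lineMap_apply_module', mulVec_add, mulVec_smul, Pi.add_apply,
      Pi.smul_apply, smul_eq_mul]
    ring
  have hslope : ∀ l, |(F l *ᵥ (u' - u)) i| ≤ (Fbar *ᵥ |u - u'|) i := fun l =>
    calc |(F l *ᵥ (u' - u)) i| ≤ (eAbs (F l) *ᵥ |u' - u|) i := abs_mulVec_le _ _ i
      _ ≤ (Fbar *ᵥ |u - u'|) i := by
        rw [abs_sub_comm]
        exact Finset.sum_le_sum fun j _ =>
          mul_le_mul_of_nonneg_right (hFbar l i j) (abs_nonneg _)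
  simpa [abs_sub_comm] using abs_sub_le_of_affineOn_closed_convex_cover hclosed hconv
    (fun t => hcover _) haff hslope zero_le_one

theorem exists_one_le_mulVec_le_smul {ι : Type*} [Fintype ι] [DecidableEq ι] {A : Matrix ι ι ℝ}
    (hA : ∀ i j, 0 ≤ A i j) {s : ℝ} (hs : 0 < s) {N : ℕ} (hN : 0 < N)
    (hAN : A ^ N *ᵥ 1 ≤ s ^ N • 1) : ∃ v : ι → ℝ, 1 ≤ v ∧ A *ᵥ v ≤ s • v := by
  -- `v = Σ_{p < N} s⁻ᵖ Aᵖ 𝟙`; then `A v = s (v - 𝟙 + s⁻ᴺ Aᴺ 𝟙)`.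
  set u : ℕ → ι → ℝ := fun p => (s⁻¹) ^ p • (A ^ p *ᵥ 1) with hu
  have hAu : ∀ p, A *ᵥ u p = s • u (p + 1) := fun p => by
    simp only [hu, mulVec_smul, mulVec_mulVec, ← pow_succ', smul_smul, pow_succ]
    rw [mul_left_comm, mul_inv_cancel₀ hs.ne', mul_one]
  have hu0 : u 0 = 1 := by simp [hu]
  have hu_nonneg : ∀ p, 0 ≤ u p := by
    intro p
    induction p with
    | zero => rw [hu0]; exact zero_le_one
    | succ p ih =>
      rw [show u (p + 1) = s⁻¹ • (A *ᵥ u p) by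
        rw [hAu, smul_smul, inv_mul_cancel₀ hs.ne', one_smul]]
      exact smul_nonneg (inv_nonneg.2 hs.le) (by simpa using mulVec_mono_of_nonneg hA ih)
  have huN : u N ≤ 1 := by
    have := smul_le_smul_of_nonneg_left hAN (pow_nonneg (inv_nonneg.2 hs.le) N)
    rwa [smul_smul, ← mul_pow, inv_mul_cancel₀ hs.ne', one_pow, one_smul] at this
  refine ⟨∑ p ∈ Finset.range N, u p, ?_, ?_⟩
  · rw [← hu0]
    exact Finset.single_le_sum (fun p _ => hu_nonneg p) (Finset.mem_range.2 hN)
  · have hshift : ∑ p ∈ Finset.range N, u (p + 1) + u 0 = ∑ p ∈ Finset.range N, u p + u N := by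
      rw [← Finset.sum_range_succ', Finset.sum_range_succ]
    rw [mulVec_sum, Finset.sum_congr rfl fun p _ => hAu p, ← Finset.smul_sum]
    refine smul_le_smul_of_nonneg_left ?_ hs.le
    rw [hu0] at hshift
    calc ∑ p ∈ Finset.range N, u (p + 1) = ∑ p ∈ Finset.range N, u p + u N - 1 := by
          rw [← hshift, add_sub_cancel_right]
      _ ≤ ∑ p ∈ Finset.range N, u p := by
          rw [add_sub_assoc]
          exact add_le_of_nonpos_right (sub_nonpos.2 huN)

section SpectralRadius

variable {ι : Type*} [Fintype ι] [DecidableEq ι]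

attribute [local instance] Matrix.linftyOpNormedAddCommGroup Matrix.linftyOpNormedRing
  Matrix.linftyOpNormedAlgebra

theorem spectralRadius_map_ofReal_le (A : Matrix ι ι ℝ) :
    spectralRadius ℂ (A.map (fun a : ℝ => (a : ℂ))) ≤ ENNReal.ofReal (specRad A) := by
  obtain ⟨C, hC⟩ := (spectrum.isBounded (𝕜 := ℂ) (A.map (fun a : ℝ => (a : ℂ)))).exists_norm_le
  have hbdd : BddAbove ((fun z : ℂ => ‖z‖) '' spectrum ℂ (A.map (fun a : ℝ => (a : ℂ)))) :=
    ⟨C, forall_mem_image.2 hC⟩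
  refine iSup₂_le fun z hz => ?_
  rw [← ENNReal.ofReal_coe_nnreal, coe_nnnorm]
  exact ENNReal.ofReal_le_ofReal (le_csSup hbdd ⟨z, hz, rfl⟩)

theorem exists_norm_pow_lt_pow_of_specRad_lt_one {A : Matrix ι ι ℝ} (hρ : specRad A < 1) :
    ∃ s : ℝ, 0 < s ∧ s < 1 ∧ ∃ N : ℕ, 0 < N ∧ ‖A ^ N‖ < s ^ N := by
  have hlt : spectralRadius ℂ (A.map (fun a : ℝ => (a : ℂ))) < 1 :=
    (spectralRadius_map_ofReal_le A).trans_lt (by simpa using hρ)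
  obtain ⟨s, hρs, hs1⟩ := ENNReal.lt_iff_exists_nnreal_btwn.1 hlt
  obtain ⟨N, hN, hN0⟩ :=
    (((spectrum.pow_nnnorm_pow_one_div_tendsto_nhds_spectralRadius _).eventually_lt_const
      hρs).and (eventually_gt_atTop 0)).exists
  have hpow : (A.map fun a : ℝ => (a : ℂ)) ^ N = (A ^ N).map fun a : ℝ => (a : ℂ) :=
    (A.map_pow Complex.ofRealHom N).symm
  rw [one_div, ENNReal.rpow_inv_lt_iff (by positivity), ENNReal.rpow_natCast, hpow] at hN
  have hnorm : ‖(A ^ N).map fun a : ℝ => (a : ℂ)‖₊ = ‖A ^ N‖₊ := by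
    simp only [Matrix.linfty_opNNNorm_def, Matrix.map_apply, Complex.nnnorm_real]
  refine ⟨s, by exact_mod_cast pos_of_gt hρs, by exact_mod_cast hs1, N, hN0, ?_⟩
  rw [← coe_nnnorm, ← hnorm]
  exact_mod_cast hN

theorem exists_one_le_mulVec_le_smul_of_specRad_lt_one {A : Matrix ι ι ℝ} (hA : ∀ i j, 0 ≤ A i j)
    (hρ : specRad A < 1) :
    ∃ v : ι → ℝ, 1 ≤ v ∧ ∃ s : ℝ, 0 < s ∧ s < 1 ∧ A *ᵥ v ≤ s • v := by
  obtain ⟨s, hs0, hs1, N, hN, hAN⟩ := exists_norm_pow_lt_pow_of_specRad_lt_one hρ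
  have hrow : A ^ N *ᵥ 1 ≤ s ^ N • 1 := fun k =>
    calc (A ^ N *ᵥ 1) k ≤ ‖A ^ N *ᵥ 1‖ :=
          (le_abs_self _).trans (norm_le_pi_norm (A ^ N *ᵥ 1) k)
      _ ≤ ‖A ^ N‖ * ‖(1 : ι → ℝ)‖ := linfty_opNorm_mulVec _ _
      _ ≤ ‖A ^ N‖ := mul_le_of_le_one_right (norm_nonneg _)
          ((pi_norm_const_le (1 : ℝ) : ‖(1 : ι → ℝ)‖ ≤ ‖(1 : ℝ)‖).trans_eq norm_one)
      _ ≤ (s ^ N • 1 : ι → ℝ) k := by simpa using hAN.le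
  obtain ⟨v, hv1, hAv⟩ := exists_one_le_mulVec_le_smul hA hs0 hN hrow
  exact ⟨v, hv1, s, hs0, hs1, hAv⟩

end SpectralRadius

section WeightedNorm

variable {ι : Type*} [Fintype ι] {v : ι → ℝ}

theorem norm_div_le_iff_abs_le_smul (hv : ∀ k, 0 < v k) {r : ℝ} (hr : 0 ≤ r) (z : ι → ℝ) :
    ‖z / v‖ ≤ r ↔ |z| ≤ r • v := by
  simp only [pi_norm_le_iff_of_nonneg hr, Pi.div_apply, Real.norm_eq_abs, abs_div,
    abs_of_pos (hv _), div_le_iff₀ (hv _), Pi.le_def, Pi.abs_apply, Pi.smul_apply, smul_eq_mul]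

theorem norm_div_le_norm (hv : 1 ≤ v) (z : ι → ℝ) : ‖z / v‖ ≤ ‖z‖ :=
  (pi_norm_le_iff_of_nonneg (norm_nonneg z)).2 fun k => by
    rw [Pi.div_apply, norm_div]
    exact (div_le_self (norm_nonneg _) ((hv k).trans (le_abs_self _))).trans
      (norm_le_pi_norm z k)

theorem EntrywiseLipschitzWith.norm_sub_div_le {A : Matrix ι ι ℝ} {T : (ι → ℝ) → ι → ℝ}
    (hT : EntrywiseLipschitzWith A T) (hA : ∀ i j, 0 ≤ A i j) (hv : ∀ k, 0 < v k) {s : ℝ}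
    (hs : 0 ≤ s) (hAv : A *ᵥ v ≤ s • v) (x y : ι → ℝ) :
    ‖(T x - T y) / v‖ ≤ s * ‖(x - y) / v‖ := by
  set r := ‖(x - y) / v‖
  have hxy : |x - y| ≤ r • v := (norm_div_le_iff_abs_le_smul hv (norm_nonneg _) _).1 le_rfl
  refine (norm_div_le_iff_abs_le_smul hv (by positivity) _).2 ?_
  calc |T x - T y| ≤ A *ᵥ |x - y| := hT x y
    _ ≤ A *ᵥ (r • v) := mulVec_mono_of_nonneg hA hxy
    _ = r • (A *ᵥ v) := mulVec_smul _ _ _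
    _ ≤ r • (s • v) := smul_le_smul_of_nonneg_left hAv (norm_nonneg _)
    _ = (s * r) • v := by rw [smul_smul, mul_comm]

theorem existsUnique_fixedPoint_of_norm_sub_div_le (hv : ∀ k, 0 < v k) {s : ℝ} (hs0 : 0 ≤ s)
    (hs1 : s < 1) {T : (ι → ℝ) → ι → ℝ} (hT : ∀ x y, ‖(T x - T y) / v‖ ≤ s * ‖(x - y) / v‖) :
    ∃! x, T x = x := by
  have hmul_div : ∀ z, z * v / v = z := fun z =>
    funext fun k => mul_div_cancel_right₀ _ (hv k).ne'
  have hdiv_mul : ∀ z, z / v * v = z := fun z => funext fun k => div_mul_cancel₀ _ (hv k).ne'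
  have hsub_div : ∀ a b : ι → ℝ, a / v - b / v = (a - b) / v := fun a b => by
    simp only [div_eq_mul_inv, sub_mul]
  -- `T` is an `s`-contraction after the change of variables `x = z * v`.
  have hcontr : ContractingWith ⟨s, hs0⟩ fun z => T (z * v) / v := by
    refine ⟨hs1, LipschitzWith.of_dist_le_mul fun z z' => ?_⟩
    show _ ≤ s * _
    simpa only [dist_eq_norm, hsub_div, ← sub_mul, hmul_div] using hT (z * v) (z' * v)
  obtain ⟨z, hz⟩ : ∃ z, T (z * v) / v = z := ⟨_, hcontr.fixedPoint_isFixedPt⟩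
  have hx : T (z * v) = z * v :=
    calc T (z * v) = T (z * v) / v * v := (hdiv_mul _).symm
      _ = z * v := by rw [hz]
  refine ⟨z * v, hx, fun y hy => ?_⟩
  have hyx := hT y (z * v)
  rw [hy, hx] at hyx
  have hzero : (y - z * v) / v = 0 :=
    norm_eq_zero.1 (by nlinarith [norm_nonneg ((y - z * v) / v)])
  rw [← sub_eq_zero, ← hdiv_mul (y - z * v), hzero, zero_mul]

end WeightedNorm

theorem norm_le_mul_exp_of_hasDerivAt {E : Type*} [NormedAddCommGroup E] [NormedSpace ℝ E]
    {τ s : ℝ} (hτ : 0 < τ) {z F : ℝ → E} (hz : ∀ t, HasDerivAt z (τ⁻¹ • (-z t + F t)) t)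
    (hF : ∀ t, ‖F t‖ ≤ s * ‖z t‖) {t : ℝ} (ht : 0 ≤ t) :
    ‖z t‖ ≤ ‖z 0‖ * Real.exp (-((1 - s) / τ) * t) := by
  -- The factor `e^{u/τ}` absorbs the `-z` term, leaving a derivative of size `≤ (s/τ) ‖w‖`.
  set w : ℝ → E := fun u => Real.exp (u / τ) • z u
  have hnorm_w : ∀ u, ‖w u‖ = Real.exp (u / τ) * ‖z u‖ := fun u => by
    rw [norm_smul, Real.norm_of_nonneg (Real.exp_pos _).le]
  have hw : ∀ u, HasDerivAt w ((τ⁻¹ * Real.exp (u / τ)) • F u) u := fun u => by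
    refine ((((hasDerivAt_id u).div_const τ).exp).smul (hz u)).congr_deriv ?_
    rw [id]
    module
  have hbound : ∀ u, ‖(τ⁻¹ * Real.exp (u / τ)) • F u‖ ≤ s / τ * ‖w u‖ := fun u => by
    rw [norm_smul, Real.norm_of_nonneg (by positivity), hnorm_w]
    calc τ⁻¹ * Real.exp (u / τ) * ‖F u‖ ≤ τ⁻¹ * Real.exp (u / τ) * (s * ‖z u‖) := by
          gcongr; exact hF u
      _ = s / τ * (Real.exp (u / τ) * ‖z u‖) := by ring
  have hgron := norm_le_gronwallBound_of_norm_deriv_right_le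
    (fun u _ => (hw u).continuousAt.continuousWithinAt) (fun u _ => (hw u).hasDerivWithinAt)
    le_rfl (fun u _ => (hbound u).trans_eq (add_zero _).symm) t ⟨ht, le_rfl⟩
  rw [gronwallBound_ε0, sub_zero, hnorm_w, hnorm_w, zero_div, Real.exp_zero, one_mul] at hgron
  have hsplit : Real.exp (s / τ * t) = Real.exp (t / τ) * Real.exp (-((1 - s) / τ) * t) := by
    rw [← Real.exp_add]; congr 1; field_simp; ring
  rw [hsplit, mul_left_comm] at hgron
  exact le_of_mul_le_mul_left hgron (Real.exp_pos _)

theorem EntrywiseLipschitzWith.exists_equilibrium_expStable {ι : Type*} [Fintype ι]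
    [DecidableEq ι] {A : Matrix ι ι ℝ} (hA : ∀ i j, 0 ≤ A i j) (hρ : specRad A < 1)
    {T : (ι → ℝ) → ι → ℝ} (hT : EntrywiseLipschitzWith A T) {τ : ℝ} (hτ : 0 < τ) :
    ∃ xstar : ι → ℝ, (xstar = T xstar ∧ ∀ y, y = T y → y = xstar) ∧
      ∃ C ≥ (1:ℝ), ∃ lam > (0:ℝ), ∀ x : ℝ → ι → ℝ,
        (∀ t, HasDerivAt x (τ⁻¹ • (-x t + T (x t))) t) →
        ∀ t ≥ (0:ℝ), ‖x t - xstar‖ ≤ C * ‖x 0 - xstar‖ * Real.exp (-lam * t) := by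
  obtain ⟨v, hv1, s, hs0, hs1, hAv⟩ := exists_one_le_mulVec_le_smul_of_specRad_lt_one hA hρ
  have hv : ∀ k, 0 < v k := fun k => zero_lt_one.trans_le (hv1 k)
  have hcontr := hT.norm_sub_div_le hA hv hs0.le hAv
  obtain ⟨xstar, hfix, huniq⟩ := existsUnique_fixedPoint_of_norm_sub_div_le hv hs0.le hs1 hcontr
  refine ⟨xstar, ⟨hfix.symm, fun y hy => huniq y hy.symm⟩, max ‖v‖ 1, le_max_right _ _,
    (1 - s) / τ, div_pos (sub_pos.2 hs1) hτ, fun x hx t ht => ?_⟩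
  have hdecay : ‖(x t - xstar) / v‖ ≤ ‖(x 0 - xstar) / v‖ * Real.exp (-((1 - s) / τ) * t) := by
    refine norm_le_mul_exp_of_hasDerivAt hτ (F := fun u => (T (x u) - T xstar) / v)
      (fun u => ?_) (fun u => hcontr _ _) ht
    simp only [div_eq_mul_inv]
    refine (((hx u).sub_const xstar).mul_const v⁻¹).congr_deriv ?_
    rw [hfix, smul_mul_assoc]
    congr 1
    ring
  calc ‖x t - xstar‖ = ‖v * ((x t - xstar) / v)‖ := by
        congr 1; ext k; exact (mul_div_cancel₀ _ (hv k).ne').symm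
    _ ≤ max ‖v‖ 1 * ‖(x t - xstar) / v‖ :=
        (norm_mul_le _ _).trans (mul_le_mul_of_nonneg_right (le_max_left _ _) (norm_nonneg _))
    _ ≤ max ‖v‖ 1 * (‖x 0 - xstar‖ * Real.exp (-((1 - s) / τ) * t)) := by
        gcongr
        exact hdecay.trans
          (mul_le_mul_of_nonneg_right (norm_div_le_norm hv1 _) (Real.exp_pos _).le)
    _ = _ := (mul_assoc _ _ _).symm

theorem EntrywiseLipschitzWith.network {ι κ μ α : Type*} [Fintype ι] [Fintype κ] [Fintype μ]
    [Fintype α] {h : α → (κ → ℝ) → μ → ℝ} {Fbar : α → Matrix μ κ ℝ}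
    (hh : ∀ a, EntrywiseLipschitzWith (Fbar a) (h a)) (hFbar : ∀ a i j, 0 ≤ Fbar a i j)
    (W : Matrix ι ι ℝ) (W1 : α → Matrix ι μ ℝ) (W2 : α → Matrix κ ι ℝ) (m : ι → ℝ)
    (cbar : α → κ → ℝ) (c : ι → ℝ) :
    EntrywiseLipschitzWith (eAbs W + ∑ a, eAbs (W1 a) * Fbar a * eAbs (W2 a))
      (fun x => clamp m (W *ᵥ x + ∑ a, W1 a *ᵥ h a (W2 a *ᵥ x + cbar a) + c)) := by
  have hlayer : ∀ a, EntrywiseLipschitzWith (eAbs (W1 a) * Fbar a * eAbs (W2 a))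
      (fun x => W1 a *ᵥ h a (W2 a *ᵥ x + cbar a)) := fun a => by
    rw [Matrix.mul_assoc]
    exact (mulVec (W1 a)).comp (fun _ _ => abs_nonneg _)
      ((hh a).comp (hFbar a) ((mulVec (W2 a)).add_const (cbar a)))
  exact (((mulVec W).add (sum _ fun a _ => hlayer a)).add_const c).clamp_comp m

theorem multilayer_linear_threshold_GES_general {n n' K : ℕ}
    (Λ : Fin K → ℕ) (q : (i : Fin K) → Fin (Λ i) → ℕ)
    (F : (i : Fin K) → Fin (Λ i) → Matrix (Fin n) (Fin n) ℝ)
    (f : (i : Fin K) → Fin (Λ i) → (Fin n → ℝ))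
    (G : (i : Fin K) → (l : Fin (Λ i)) → Matrix (Fin (q i l)) (Fin n) ℝ)
    (g : (i : Fin K) → (l : Fin (Λ i)) → Fin (q i l) → ℝ)
    (h : Fin K → (Fin n → ℝ) → (Fin n → ℝ))
    (hcover : ∀ (i : Fin K) (c : Fin n → ℝ), ∃ l : Fin (Λ i), 0 ≤ G i l *ᵥ c + g i l)
    (hpiece : ∀ (i : Fin K) (l : Fin (Λ i)) (c : Fin n → ℝ),
      0 ≤ G i l *ᵥ c + g i l → h i c = F i l *ᵥ c + f i l)
    (Fbar : Fin K → Matrix (Fin n) (Fin n) ℝ)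
    (hFbar : ∀ (i : Fin K) (a b : Fin n), Fbar i a b = ⨆ lam : Fin (Λ i), |F i lam a b|)
    (W : Matrix (Fin n') (Fin n') ℝ)
    (W1 : Fin K → Matrix (Fin n') (Fin n) ℝ)
    (W2 : Fin K → Matrix (Fin n) (Fin n') ℝ)
    (m : Fin n' → ℝ)
    (τ : ℝ) (hτ : 0 < τ)
    (hρ : specRad (eAbs W + ∑ i : Fin K, eAbs (W1 i) * Fbar i * eAbs (W2 i)) < 1)
    (cbar : Fin K → (Fin n → ℝ)) (c : Fin n' → ℝ) :
    ∃ xstar : Fin n' → ℝ,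
      (xstar = clamp m (W *ᵥ xstar + ∑ i : Fin K, W1 i *ᵥ h i (W2 i *ᵥ xstar + cbar i) + c) ∧
        ∀ y : Fin n' → ℝ,
          y = clamp m (W *ᵥ y + ∑ i : Fin K, W1 i *ᵥ h i (W2 i *ᵥ y + cbar i) + c) →
          y = xstar) ∧
      ∃ C ≥ (1:ℝ), ∃ lam > (0:ℝ), ∀ x : ℝ → Fin n' → ℝ,
        (∀ t, HasDerivAt x
          (τ⁻¹ • (-x t + clamp m
            (W *ᵥ x t + ∑ i : Fin K, W1 i *ᵥ h i (W2 i *ᵥ x t + cbar i) + c))) t) →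
        ∀ t ≥ (0:ℝ), ‖x t - xstar‖ ≤ C * ‖x 0 - xstar‖ * Real.exp (-lam * t) := by
  have hFbar_nonneg : ∀ i a b, 0 ≤ Fbar i a b := fun i a b =>
    (hFbar i a b).symm ▸ Real.iSup_nonneg fun _ => abs_nonneg _
  have hF_le : ∀ i l a b, |F i l a b| ≤ Fbar i a b := fun i l a b =>
    (hFbar i a b).symm ▸
      le_ciSup (f := fun lam => |F i lam a b|) (Set.finite_range _).bddAbove l
  have hgain_nonneg : ∀ a b,
      0 ≤ (eAbs W + ∑ i : Fin K, eAbs (W1 i) * Fbar i * eAbs (W2 i)) a b := fun a b => by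
    simp only [Matrix.add_apply, Matrix.sum_apply]
    refine add_nonneg (abs_nonneg _) (Finset.sum_nonneg fun i _ => ?_)
    exact mul_apply_nonneg (mul_apply_nonneg (fun _ _ => abs_nonneg _) (hFbar_nonneg i))
      (fun _ _ => abs_nonneg _) a b
  exact (EntrywiseLipschitzWith.network
    (fun i => .of_piecewiseAffine (hcover i) (hpiece i) (hF_le i)) hFbar_nonneg W W1 W2 m cbar c
    ).exists_equilibrium_expStable hgain_nonneg hρ hτ

/-- Sufficient condition for existence and uniqueness of equilibria and global exponential
stability in multilayer linear-threshold networks with parallel connections: if the functions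
`h_i` are piecewise-affine with entrywise maximal gains `F̄_i`, and
`ρ(|W| + Σ_i |W_1^i| F̄_i |W_2^i|) < 1`, then for all constants `c̄_i, c`, the dynamics
`τ ẋ = −x + [W x + Σ_i W_1^i h_i(W_2^i x + c̄_i) + c]_0^m` is globally exponentially stable
to a unique equilibrium. -/
theorem multilayer_linear_threshold_GES {n n' K : ℕ}
    (Λ : Fin K → ℕ) (q : (i : Fin K) → Fin (Λ i) → ℕ)
    (F : (i : Fin K) → Fin (Λ i) → Matrix (Fin n) (Fin n) ℝ)
    (f : (i : Fin K) → Fin (Λ i) → (Fin n → ℝ))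
    (G : (i : Fin K) → (l : Fin (Λ i)) → Matrix (Fin (q i l)) (Fin n) ℝ)
    (g : (i : Fin K) → (l : Fin (Λ i)) → Fin (q i l) → ℝ)
    (h : Fin K → (Fin n → ℝ) → (Fin n → ℝ))
    (hcover : ∀ (i : Fin K) (c : Fin n → ℝ), ∃ l : Fin (Λ i), 0 ≤ G i l *ᵥ c + g i l)
    (hpiece : ∀ (i : Fin K) (l : Fin (Λ i)) (c : Fin n → ℝ),
      0 ≤ G i l *ᵥ c + g i l → h i c = F i l *ᵥ c + f i l)
    (Fbar : Fin K → Matrix (Fin n) (Fin n) ℝ)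
    (hFbar : ∀ (i : Fin K) (a b : Fin n), Fbar i a b = ⨆ lam : Fin (Λ i), |F i lam a b|)
    (W : Matrix (Fin n') (Fin n') ℝ)
    (W1 : Fin K → Matrix (Fin n') (Fin n) ℝ)
    (W2 : Fin K → Matrix (Fin n) (Fin n') ℝ)
    (m : Fin n' → ℝ) (hm : ∀ j, 0 < m j)
    (τ : ℝ) (hτ : 0 < τ)
    (hρ : specRad (eAbs W + ∑ i : Fin K, eAbs (W1 i) * Fbar i * eAbs (W2 i)) < 1)
    (cbar : Fin K → (Fin n → ℝ)) (c : Fin n' → ℝ) :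
    ∃ xstar : Fin n' → ℝ,
      (xstar = clamp m (W *ᵥ xstar + ∑ i : Fin K, W1 i *ᵥ h i (W2 i *ᵥ xstar + cbar i) + c) ∧
        ∀ y : Fin n' → ℝ,
          y = clamp m (W *ᵥ y + ∑ i : Fin K, W1 i *ᵥ h i (W2 i *ᵥ y + cbar i) + c) →
          y = xstar) ∧
      ∃ C ≥ (1:ℝ), ∃ lam > (0:ℝ), ∀ x : ℝ → Fin n' → ℝ,
        (∀ t, HasDerivAt x
          (τ⁻¹ • (-x t + clamp m
            (W *ᵥ x t + ∑ i : Fin K, W1 i *ᵥ h i (W2 i *ᵥ x t + cbar i) + c))) t) →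
        ∀ t ≥ (0:ℝ), ‖x t - xstar‖ ≤ C * ‖x 0 - xstar‖ * Real.exp (-lam * t) :=
  multilayer_linear_threshold_GES_general Λ q F f G g h hcover hpiece Fbar hFbar W W1 W2 m τ hτ hρ
    cbar c
end
end

section
/- Every single-valued piecewise-affine function h : ℝ^n → ℝ^n — that is, a function for which there exist a finite index set Λ and, for each λ ∈ Λ, a matrix F_λ, vector f_λ, matrix G_λ and vector g_λ such that h(c) = F_λ c + f_λ for all c in the polyhedron Ψ_λ = {c : G_λ c + g_λ ≥ 0}, with the union of the Ψ_λ equal to ℝ^n — is globally Lipschitz: there exists L ≥ 0 such that ‖h(c) − h(c')‖ ≤ L ‖c − c'‖ for all c, c' ∈ ℝ^n. -/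
/-!
On each polyhedron `Ψ_λ` the function is affine, hence Lipschitz with constant the operator
norm of `F_λ`; let `L` be the largest of these. Restrict `h` to a segment `[c', c]`. The
parameters of the segment lying in a given piece form a closed set, and since there are finitely
many of them, every parameter `s` has a neighbourhood all of whose points share a piece with `s`.
So `t ↦ h (lineMap c' c t)` satisfies a local Lipschitz bound at every point, and the one-sided
mean value inequality turns this into `‖h c - h c'‖ ≤ L ‖c - c'‖`.
-/

open Matrix

noncomputable section

/-- A function `h : ℝ^n → ℝ^n` is piecewise-affine if there are finitely many affine pieces
`c ↦ F_λ c + f_λ`, valid on polyhedra `Ψ_λ = {c : G_λ c + g_λ ≥ 0}` whose union is all of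
`ℝ^n`. -/
def IsPiecewiseAffine {n : ℕ} (h : (Fin n → ℝ) → (Fin n → ℝ)) : Prop :=
  ∃ (K : ℕ) (q : Fin K → ℕ)
    (F : Fin K → Matrix (Fin n) (Fin n) ℝ) (f : Fin K → (Fin n → ℝ))
    (G : (l : Fin K) → Matrix (Fin (q l)) (Fin n) ℝ) (g : (l : Fin K) → Fin (q l) → ℝ),
    (∀ c : Fin n → ℝ, ∃ l : Fin K, 0 ≤ G l *ᵥ c + g l) ∧
    (∀ (l : Fin K) (c : Fin n → ℝ), 0 ≤ G l *ᵥ c + g l → h c = F l *ᵥ c + f l)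

open Filter Topology NNReal

theorem eventually_exists_mem_and_mem_of_isClosed_cover {X ι : Type*} [TopologicalSpace X]
    [Finite ι] {P : ι → Set X} (hclosed : ∀ i, IsClosed (P i)) (hcover : ∀ x, ∃ i, x ∈ P i)
    (x : X) : ∀ᶠ y in 𝓝 x, ∃ i, x ∈ P i ∧ y ∈ P i := by
  have hfar : IsClosed (⋃ i ∈ {i | x ∉ P i}, P i) :=
    (Set.toFinite _).isClosed_biUnion fun i _ => hclosed i
  have hx : x ∉ ⋃ i ∈ {i | x ∉ P i}, P i := by simp
  filter_upwards [hfar.isOpen_compl.mem_nhds hx] with y hy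
  obtain ⟨i, hi⟩ := hcover y
  by_contra! hne
  exact hy (Set.mem_biUnion (fun hxi => hne i hxi hi) hi)

theorem lipschitzWith_of_forall_eventually_dist_le {E : Type*} [PseudoMetricSpace E]
    {g : ℝ → E} {K : ℝ≥0} (hg : ∀ s, ∀ᶠ t in 𝓝 s, dist (g t) (g s) ≤ K * dist t s) :
    LipschitzWith K g := by
  have hcont : Continuous g := continuous_iff_continuousAt.2 fun s => by
    refine tendsto_iff_dist_tendsto_zero.2 (squeeze_zero' (.of_forall fun _ => dist_nonneg)
      (hg s) ?_)
    exact (by fun_prop : Continuous fun t => (K : ℝ) * dist t s).tendsto' s 0 (by simp)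
  have hle_of_le : ∀ a b, a ≤ b → dist (g b) (g a) ≤ K * (b - a) := by
    intro a b hab
    refine image_le_of_liminf_slope_right_le_deriv_boundary (f := fun t => dist (g t) (g a))
      (B := fun t => K * (t - a)) (B' := fun _ => K) (hcont.dist continuous_const).continuousOn
      (by simp) (by fun_prop) (fun x _ => ?_) (fun x _ r hr => ?_) ⟨hab, le_rfl⟩
    · simpa using (((hasDerivAt_id x).sub_const a).const_mul (K : ℝ)).hasDerivWithinAt
    · refine Eventually.frequently ?_
      filter_upwards [nhdsWithin_le_nhds (hg x), self_mem_nhdsWithin] with z hz (hxz : x < z)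
      rw [slope_def_field, div_lt_iff₀ (sub_pos.2 hxz)]
      rw [Real.dist_eq, abs_of_pos (sub_pos.2 hxz)] at hz
      nlinarith [dist_triangle (g z) (g x) (g a)]
  refine LipschitzWith.of_dist_le_mul fun x y => ?_
  rcases le_total x y with hxy | hyx
  · rw [dist_comm, Real.dist_eq, abs_sub_comm, abs_of_nonneg (sub_nonneg.2 hxy)]
    exact hle_of_le x y hxy
  · rw [Real.dist_eq, abs_of_nonneg (sub_nonneg.2 hyx)]
    exact hle_of_le y x hyx

theorem lipschitzWith_of_finite_isClosed_cover {E F ι : Type*} [NormedAddCommGroup E]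
    [NormedSpace ℝ E] [PseudoMetricSpace F] [Finite ι] {P : ι → Set E} {h : E → F} {K : ℝ≥0}
    (hclosed : ∀ i, IsClosed (P i)) (hcover : ∀ x, ∃ i, x ∈ P i)
    (hlip : ∀ i, LipschitzOnWith K h (P i)) : LipschitzWith K h := by
  refine LipschitzWith.of_dist_le_mul fun x y => ?_
  set γ : ℝ → E := ⇑(AffineMap.lineMap (k := ℝ) y x)
  have hγ : LipschitzWith (nndist y x) γ := lipschitzWith_lineMap y x
  have hlipγ : LipschitzWith (K * nndist y x) (h ∘ γ) :=
    lipschitzWith_of_forall_eventually_dist_le fun s =>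
      (eventually_exists_mem_and_mem_of_isClosed_cover
        (fun i => (hclosed i).preimage hγ.continuous) (fun t => hcover (γ t)) s).mono
        fun t ⟨i, hs, ht⟩ =>
          ((hlip i).comp hγ.lipschitzOnWith (Set.mapsTo_preimage γ (P i))).dist_le_mul t ht s hs
  simpa [γ, dist_comm y x] using hlipγ.dist_le_mul 1 0

theorem isClosed_setOf_nonneg_mulVec_add {m n : Type*} [Fintype n] (G : Matrix m n ℝ)
    (g : m → ℝ) : IsClosed {c | 0 ≤ G *ᵥ c + g} :=
  isClosed_le continuous_const (by fun_prop)

theorem lipschitzWith_mulVec_add {m n : Type*} [Fintype m] [Fintype n]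
    (F : Matrix m n ℝ) (f : m → ℝ) :
    LipschitzWith ‖F.mulVecLin.toContinuousLinearMap‖₊ fun c => F *ᵥ c + f :=
  LipschitzWith.of_dist_le_mul fun c c' => by
    simpa [dist_add_right] using F.mulVecLin.toContinuousLinearMap.lipschitz.dist_le_mul c c'

/-- Every (single-valued) piecewise-affine function is globally Lipschitz. -/
theorem piecewise_affine_globally_lipschitz {n : ℕ}
    (h : (Fin n → ℝ) → (Fin n → ℝ)) (hpwa : IsPiecewiseAffine h) :
    ∃ L : ℝ, 0 ≤ L ∧ ∀ c c' : Fin n → ℝ, ‖h c - h c'‖ ≤ L * ‖c - c'‖ := by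
  obtain ⟨K, _, F, f, G, g, hcover, hpiece⟩ := hpwa
  set M : Fin K → ℝ≥0 := fun l => ‖(F l).mulVecLin.toContinuousLinearMap‖₊
  set L : ℝ≥0 := Finset.univ.sup M
  have hlip : LipschitzWith L h :=
    lipschitzWith_of_finite_isClosed_cover (fun l => isClosed_setOf_nonneg_mulVec_add (G l) (g l))
      hcover fun l => LipschitzOnWith.of_dist_le_mul fun c hc c' hc' => by
        rw [hpiece l c hc, hpiece l c' hc']
        exact ((lipschitzWith_mulVec_add (F l) (f l)).weaken
          (Finset.le_sup (f := M) (Finset.mem_univ l))).dist_le_mul c c'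
  exact ⟨L, L.2, fun c c' => by simpa only [dist_eq_norm] using hlip.dist_le_mul c c'⟩
end
end

section
/- Consider the linear-threshold dynamics τ ẋ = −x + [W x + d(t)]_0^m in ℝ^n, where τ > 0, W ∈ ℝ^{n×n}, m ∈ ℝ^n with m > 0, and d : ℝ_{≥0} → ℝ^n is continuous. If the initial condition satisfies 0 ≤ x(0) ≤ m (entrywise), then every solution satisfies 0 ≤ x(t) ≤ m for all t ≥ 0; that is, the box [0, m] is forward invariant. -/
open Matrix

noncomputable section

/-!
Each coordinate obeys `τ ẋₖ = cₖ(t) − xₖ` with a target `cₖ(t) = ([W x + d(t)]_0^m)ₖ ∈ [0, mₖ]`.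
A scalar `y` with `ẏ = a (c − y)`, `a ≥ 0`, has `(e^{a t} y)' = a e^{a t} c`, so `e^{a t} y` is
nondecreasing when `c ≥ 0` and `y` cannot become negative. Applied to `xₖ` and to `mₖ − xₖ`
this keeps `x` in the box.
-/

open Set

theorem clamp_apply_nonneg {ι : Type*} {m : ι → ℝ} (x : ι → ℝ) {k : ι} (hm : 0 ≤ m k) :
    0 ≤ clamp m x k :=
  le_min (le_max_right _ _) hm

theorem clamp_apply_le {ι : Type*} (m x : ι → ℝ) (k : ι) : clamp m x k ≤ m k :=
  min_le_right _ _

theorem monotoneOn_Ici_of_hasDerivAt_nonneg {f f' : ℝ → ℝ} {a : ℝ}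
    (hf : ∀ t ∈ Ici a, HasDerivAt f (f' t) t) (hf' : ∀ t ∈ Ici a, 0 ≤ f' t) :
    MonotoneOn f (Ici a) :=
  monotoneOn_of_hasDerivWithinAt_nonneg (convex_Ici a)
    (fun t ht => (hf t ht).continuousAt.continuousWithinAt)
    (fun t ht => (hf t (interior_subset ht)).hasDerivWithinAt)
    (fun t ht => hf' t (interior_subset ht))

theorem nonneg_of_hasDerivAt_mul_sub {y c : ℝ → ℝ} {a t₀ : ℝ} (ha : 0 ≤ a)
    (hy : ∀ t ∈ Ici t₀, HasDerivAt y (a * (c t - y t)) t)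
    (hc : ∀ t ∈ Ici t₀, 0 ≤ c t) (hy₀ : 0 ≤ y t₀) :
    ∀ t ∈ Ici t₀, 0 ≤ y t := by
  intro t ht
  have hexp (s : ℝ) : HasDerivAt (fun u => Real.exp (a * u)) (Real.exp (a * s) * a) s := by
    simpa using ((hasDerivAt_id s).const_mul a).exp
  have hmono : MonotoneOn (fun u => Real.exp (a * u) * y u) (Ici t₀) :=
    monotoneOn_Ici_of_hasDerivAt_nonneg
      (fun s hs => ((hexp s).mul (hy s hs)).congr_deriv
        (show _ = Real.exp (a * s) * a * c s by ring))
      (fun s hs => by have := hc s hs; positivity)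
  have h : 0 ≤ Real.exp (a * t) * y t :=
    (mul_nonneg (Real.exp_pos _).le hy₀).trans (hmono self_mem_Ici ht ht)
  exact nonneg_of_mul_nonneg_right h (Real.exp_pos _)

theorem linear_threshold_box_forward_invariant_general {n : ℕ}
    (τ : ℝ) (hτ : 0 < τ)
    (W : Matrix (Fin n) (Fin n) ℝ) (m : Fin n → ℝ) (hm : ∀ k, 0 < m k)
    (d : ℝ → Fin n → ℝ)
    (x : ℝ → Fin n → ℝ)
    (hdyn : ∀ t, 0 ≤ t →
      HasDerivAt x (τ⁻¹ • (-x t + clamp m (W *ᵥ x t + d t))) t)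
    (hx0 : ∀ k, 0 ≤ x 0 k ∧ x 0 k ≤ m k) :
    ∀ t, 0 ≤ t → ∀ k, 0 ≤ x t k ∧ x t k ≤ m k := by
  intro t ht k
  set c : ℝ → ℝ := fun s => clamp m (W *ᵥ x s + d s) k
  have hxk (s : ℝ) (hs : s ∈ Ici (0 : ℝ)) :
      HasDerivAt (fun u => x u k) (τ⁻¹ * (c s - x s k)) s := by
    refine (hasDerivAt_pi.1 (hdyn s hs) k).congr_deriv ?_
    simp only [Pi.smul_apply, Pi.add_apply, Pi.neg_apply, smul_eq_mul, c]
    ring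
  have hτ' : 0 ≤ τ⁻¹ := inv_nonneg.2 hτ.le
  constructor
  · exact nonneg_of_hasDerivAt_mul_sub hτ' hxk
      (fun s _ => clamp_apply_nonneg _ (hm k).le) (hx0 k).1 t ht
  · exact sub_nonneg.1 (nonneg_of_hasDerivAt_mul_sub (c := fun s => m k - c s) hτ'
      (fun s hs => ((hxk s hs).const_sub (m k)).congr_deriv (by ring))
      (fun s _ => sub_nonneg.2 (clamp_apply_le _ _ _)) (sub_nonneg.2 (hx0 k).2) t ht)

/-- For the linear-threshold dynamics `τ ẋ = −x + [W x + d(t)]_0^m` with a continuous input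
`d`, the box `[0, m]` is forward invariant: if `0 ≤ x(0) ≤ m` entrywise, then
`0 ≤ x(t) ≤ m` for all `t ≥ 0`. -/
theorem linear_threshold_box_forward_invariant {n : ℕ}
    (τ : ℝ) (hτ : 0 < τ)
    (W : Matrix (Fin n) (Fin n) ℝ) (m : Fin n → ℝ) (hm : ∀ k, 0 < m k)
    (d : ℝ → Fin n → ℝ) (hd : Continuous d)
    (x : ℝ → Fin n → ℝ)
    (hdyn : ∀ t, 0 ≤ t →
      HasDerivAt x (τ⁻¹ • (-x t + clamp m (W *ᵥ x t + d t))) t)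
    (hx0 : ∀ k, 0 ≤ x 0 k ∧ x 0 k ≤ m k) :
    ∀ t, 0 ≤ t → ∀ k, 0 ≤ x t k ∧ x t k ≤ m k :=
  linear_threshold_box_forward_invariant_general τ hτ W m hm d x hdyn hx0
end
end
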